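/- The rank-16 even two-elementary lattice L = H ⊕ E₈(−1) ⊕ A₁(−1)^{⊕6} is isometric to each of the following lattices: H ⊕ E₇(−1) ⊕ D₄(−1) ⊕ A₁(−1)^{⊕3}; H ⊕ D₆(−1) ⊕ D₄(−1)^{⊕2}; H ⊕ D₆(−1)^{⊕2} ⊕ A₁(−1)^{⊕2}; H ⊕ D₁₀(−1) ⊕ A₁(−1)^{⊕4}; and H ⊕ D₈(−1) ⊕ D₄(−1) ⊕ A₁(−1)^{⊕2}. Concretely, for each pair of the corresponding 16×16 block-diagonal Gram matrices G₁, G₂ there exists an integer matrix P with det P = ±1 and Pᵀ·G₁·P = G₂. -/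
import Mathlib


open Matrix

/-- Square integer matrices of size `n`. -/
abbrev IntMat (n : ℕ) := Matrix (Fin n) (Fin n) ℤ

/-- Block-diagonal (orthogonal) direct sum of Gram matrices. -/
def dsum {m n : ℕ} (A : IntMat m) (B : IntMat n) : IntMat (m + n) :=
  Matrix.reindex finSumFinEquiv finSumFinEquiv (Matrix.fromBlocks A 0 0 B)

infixl:65 " ⊕ₘ " => dsum

/-- Gram matrix of the hyperbolic plane `H`. -/
def HypMat : IntMat 2 := !![0, 1; 1, 0]

/-- The standard Cartan matrix of the root system `Aₙ`. -/
def CartanA (n : ℕ) : IntMat n :=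
  Matrix.of fun i j =>
    if i = j then 2 else if (i : ℕ) + 1 = j ∨ (j : ℕ) + 1 = i then -1 else 0

/-- The standard Cartan matrix of the root system `Dₙ` (`n ≥ 3`): a chain on the
nodes `0, …, n-2` together with the node `n-1` attached to the node `n-3`. -/
def CartanD (n : ℕ) : IntMat n :=
  Matrix.of fun i j =>
    if i = j then 2
    else if ((i : ℕ) + 1 = j ∨ (j : ℕ) + 1 = i) ∧ (i : ℕ) + 1 ≠ n ∧ (j : ℕ) + 1 ≠ n then -1
    else if ((i : ℕ) + 3 = n ∧ (j : ℕ) + 1 = n) ∨ ((j : ℕ) + 3 = n ∧ (i : ℕ) + 1 = n) then -1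
    else 0

/-- The standard Cartan matrix of the root system `E₇`: a chain on the nodes
`0, …, 5` with the node `6` attached to the node `2`. -/
def CartanE₇ : IntMat 7 :=
  !![ 2, -1,  0,  0,  0,  0,  0;
     -1,  2, -1,  0,  0,  0,  0;
      0, -1,  2, -1,  0,  0, -1;
      0,  0, -1,  2, -1,  0,  0;
      0,  0,  0, -1,  2, -1,  0;
      0,  0,  0,  0, -1,  2,  0;
      0,  0, -1,  0,  0,  0,  2]

/-- The standard Cartan matrix of the root system `E₈`: a chain on the nodes
`0, …, 6` with the node `7` attached to the node `2`. -/
def CartanE₈ : IntMat 8 :=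
  !![ 2, -1,  0,  0,  0,  0,  0,  0;
     -1,  2, -1,  0,  0,  0,  0,  0;
      0, -1,  2, -1,  0,  0,  0, -1;
      0,  0, -1,  2, -1,  0,  0,  0;
      0,  0,  0, -1,  2, -1,  0,  0;
      0,  0,  0,  0, -1,  2, -1,  0;
      0,  0,  0,  0,  0, -1,  2,  0;
      0,  0, -1,  0,  0,  0,  0,  2]

/-- Two integral lattices given by Gram matrices `G₁, G₂` of rank `N` are isometric:
there is `P ∈ GL(N, ℤ)` with `Pᵀ G₁ P = G₂`. -/
def LatticeIsometric {N : ℕ} (G₁ G₂ : IntMat N) : Prop :=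
  ∃ P : IntMat N, (P.det = 1 ∨ P.det = -1) ∧ Pᵀ * G₁ * P = G₂

/-- Gram matrix of `L = H ⊕ E₈(-1) ⊕ A₁(-1)^{⊕6}`. -/
def GramL : IntMat 16 :=
  HypMat ⊕ₘ (-CartanE₈) ⊕ₘ (-CartanA 1) ⊕ₘ (-CartanA 1) ⊕ₘ (-CartanA 1) ⊕ₘ (-CartanA 1)
    ⊕ₘ (-CartanA 1) ⊕ₘ (-CartanA 1)

/-- Gram matrix of `H ⊕ E₇(-1) ⊕ D₄(-1) ⊕ A₁(-1)^{⊕3}`. -/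
def GramL₁ : IntMat 16 :=
  HypMat ⊕ₘ (-CartanE₇) ⊕ₘ (-CartanD 4) ⊕ₘ (-CartanA 1) ⊕ₘ (-CartanA 1) ⊕ₘ (-CartanA 1)

/-- Gram matrix of `H ⊕ D₆(-1) ⊕ D₄(-1)^{⊕2}`. -/
def GramL₂ : IntMat 16 :=
  HypMat ⊕ₘ (-CartanD 6) ⊕ₘ (-CartanD 4) ⊕ₘ (-CartanD 4)

/-- Gram matrix of `H ⊕ D₆(-1)^{⊕2} ⊕ A₁(-1)^{⊕2}`. -/
def GramL₃ : IntMat 16 :=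
  HypMat ⊕ₘ (-CartanD 6) ⊕ₘ (-CartanD 6) ⊕ₘ (-CartanA 1) ⊕ₘ (-CartanA 1)

/-- Gram matrix of `H ⊕ D₁₀(-1) ⊕ A₁(-1)^{⊕4}`. -/
def GramL₄ : IntMat 16 :=
  HypMat ⊕ₘ (-CartanD 10) ⊕ₘ (-CartanA 1) ⊕ₘ (-CartanA 1) ⊕ₘ (-CartanA 1) ⊕ₘ (-CartanA 1)

/-- Gram matrix of `H ⊕ D₈(-1) ⊕ D₄(-1) ⊕ A₁(-1)^{⊕2}`. -/
def GramL₅ : IntMat 16 :=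
  HypMat ⊕ₘ (-CartanD 8) ⊕ₘ (-CartanD 4) ⊕ₘ (-CartanA 1) ⊕ₘ (-CartanA 1)

def P1 : IntMat 16 := !![6, 35, 6, -2, 8, -12, 0, 12, -8, -8, 4, -12, -2, 0, 0, 0;
    3, 18, 3, -1, 4, -6, 0, 6, -4, -3, 2, -7, -1, 0, 0, 0;
    2, 11, 2, 0, 4, -5, 0, 3, -4, -2, 1, -4, 0, 0, 0, 0;
    0, 0, 0, 1, 3, -3, 0, -1, -2, 1, -1, 1, 1, 0, 0, 0;
    -2, -12, -2, 2, 2, 0, 0, -5, -1, 4, -3, 6, 2, 0, 0, 0;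
    0, 1, 0, 1, 4, -3, -1, 0, -3, 1, -1, 1, 1, 0, 0, 0;
    0, -1, -1, 1, 3, -2, -1, 0, -2, 1, -1, 1, 1, 0, 0, 0;
    -2, -12, -3, 2, -1, 3, -1, -4, 1, 3, -2, 5, 1, 0, 0, 0;
    0, 1, -1, 1, 1, -1, 0, 0, -1, 0, 0, 0, 0, 0, 0, 0;
    -2, -12, -2, 1, 0, 2, 0, -5, 1, 3, -2, 5, 1, 0, 0, 0;
    1, 5, 1, 0, 1, -2, 0, 2, -1, -1, 1, -2, -1, 0, 0, 0;
    -2, -12, -2, 1, -3, 4, 0, -4, 3, 2, -1, 4, 1, 0, 0, 0;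
    0, 0, 0, 0, 0, 0, 0, 0, 0, 0, 0, 0, 0, 0, -1, 0;
    0, 0, 0, 0, 0, 0, 0, 0, 0, 0, 0, 0, 0, 0, 0, 1;
    -1, -6, -1, 0, -1, 2, 0, -2, 1, 1, 0, 2, 0, 0, 0, 0;
    0, 0, 0, 0, 0, 0, 0, 0, 0, 0, 0, 0, 0, -1, 0, 0]

def Q1 : IntMat 16 := !![18, 35, -22, -1, 13, -15, -9, 24, -14, 12, -10, 24, 0, 0, 12, 0;
    3, 6, -4, 0, 2, -2, -2, 4, -2, 2, -2, 4, 0, 0, 2, 0;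
    1, 2, -1, -1, 1, 0, -1, 1, -1, 1, 0, 2, 0, 0, 0, 0;
    5, 10, -6, -2, 4, -3, -3, 6, -3, 4, -2, 8, 0, 0, 2, 0;
    8, 16, -10, -3, 6, -5, -4, 9, -5, 7, -4, 12, 0, 0, 4, 0;
    9, 18, -11, -3, 7, -6, -5, 11, -6, 7, -5, 13, 0, 0, 5, 0;
    4, 8, -5, -2, 4, -3, -2, 4, -2, 3, -2, 6, 0, 0, 2, 0;
    -1, -2, 1, -1, 0, 1, 1, -2, 1, -1, 1, -1, 0, 0, -1, 0;
    6, 12, -8, -1, 4, -4, -3, 7, -4, 5, -3, 9, 0, 0, 3, 0;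
    5, 11, -7, 0, 4, -4, -3, 7, -4, 3, -3, 7, 0, 0, 4, 0;
    7, 14, -9, 0, 5, -5, -4, 9, -5, 4, -4, 10, 0, 0, 6, 0;
    7, 13, -9, 0, 5, -5, -4, 9, -5, 4, -4, 9, 0, 0, 5, 0;
    4, 8, -5, 0, 3, -3, -2, 5, -3, 2, -3, 6, 0, 0, 3, 0;
    0, 0, 0, 0, 0, 0, 0, 0, 0, 0, 0, 0, 0, 0, 0, -1;
    0, 0, 0, 0, 0, 0, 0, 0, 0, 0, 0, 0, -1, 0, 0, 0;
    0, 0, 0, 0, 0, 0, 0, 0, 0, 0, 0, 0, 0, 1, 0, 0]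

def P2 : IntMat 16 := !![312, 926, 638, -20, -330, 312, 2, -288, 153, 18, 447, -483, -4, -10, 22, 8;
    157, 466, 321, -10, -166, 157, 1, -145, 77, 9, 225, -243, -1, -6, 11, 5;
    106, 313, 217, -8, -111, 106, 0, -98, 53, 6, 151, -163, -1, -4, 7, 3;
    11, 29, 22, -3, -9, 11, -1, -11, 7, 0, 15, -15, 0, -1, 0, 0;
    -84, -254, -172, 2, 93, -84, -3, 77, -39, -6, -121, 133, 1, 2, -7, -3;
    23, 65, 47, -4, -21, 23, -2, -22, 13, 0, 33, -33, 0, -1, 0, 0;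
    16, 45, 33, -3, -14, 15, -1, -15, 9, 0, 23, -23, 0, -1, 0, 0;
    -90, -269, -184, 5, 97, -91, -1, 83, -43, -6, -129, 141, 1, 3, -7, -3;
    7, 19, 14, -1, -6, 6, 0, -6, 4, 0, 10, -10, 0, 0, 0, 0;
    -96, -287, -196, 4, 104, -96, -2, 88, -46, -6, -138, 150, 1, 3, -7, -3;
    51, 151, 104, -3, -54, 51, 0, -47, 25, 3, 73, -79, 0, -2, 4, 1;
    -108, -321, -221, 7, 114, -108, -1, 100, -53, -6, -155, 167, 1, 4, -8, -3;
    -3, -9, -6, 0, 3, -3, 0, 3, -1, -1, -4, 5, 0, 0, 0, 0;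
    3, 9, 6, 0, -3, 3, 0, -3, 2, 0, 4, -5, 0, 0, 0, 0;
    -53, -157, -108, 3, 56, -53, 0, 49, -26, -3, -76, 82, 1, 2, -4, -2;
    -1, -2, -2, 0, 1, -1, 0, 1, 0, 0, -1, 1, 0, 0, 0, 0]

def Q2 : IntMat 16 := !![466, 926, -597, 1, 315, -339, -294, 602, -307, 320, -302, 642, 18, -18, 314, 4;
    157, 312, -201, 0, 106, -114, -99, 203, -104, 108, -102, 216, 6, -6, 106, 2;
    -230, -457, 295, -1, -155, 167, 145, -297, 152, -158, 149, -317, -9, 9, -155, -3;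
    -139, -276, 178, -1, -93, 101, 87, -179, 92, -96, 90, -192, -6, 6, -94, -2;
    -58, -115, 74, -1, -38, 42, 36, -75, 39, -40, 37, -81, -3, 3, -39, -1;
    -143, -284, 183, -1, -95, 104, 89, -185, 95, -99, 92, -198, -6, 6, -96, -2;
    -72, -143, 92, 0, -48, 52, 45, -93, 48, -50, 46, -100, -3, 3, -48, -1;
    1, 2, -1, -1, 2, -1, -1, 1, 0, 0, -1, 1, 0, 0, 1, 0;
    -77, -153, 99, 0, -52, 56, 48, -99, 51, -53, 50, -106, -3, 3, -52, 0;
    -77, -153, 99, 0, -52, 56, 48, -99, 51, -53, 50, -106, -4, 2, -52, 0;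
    -151, -300, 193, 0, -102, 110, 95, -195, 100, -104, 98, -208, -6, 5, -102, -1;
    83, 165, -106, 0, 56, -60, -53, 108, -55, 57, -54, 114, 3, -4, 56, 1;
    -1, -1, 1, 0, -1, 1, 0, -1, 1, 0, 1, -1, 0, 0, 0, 0;
    -3, -6, 4, 0, -3, 3, 1, -4, 3, -1, 2, -4, 0, 0, -2, 0;
    -7, -14, 9, 0, -5, 5, 4, -9, 5, -4, 5, -10, 0, 0, -5, 0;
    -4, -7, 5, 0, -3, 3, 2, -5, 3, -2, 2, -5, 0, 0, -3, 0]

def P3 : IntMat 16 := !![7, 19, -7, 0, -3, -3, 6, 0, 10, -3, -5, -6, 7, 5, 0, 0;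
    4, 13, -4, 0, -2, -2, 4, 0, 6, -2, -3, -4, 5, 3, 0, 0;
    1, 3, 0, 1, -2, 0, 0, 0, 2, 0, -1, -1, 1, 1, 0, 0;
    -2, -6, 4, 2, -2, 1, -2, 0, -2, 2, 1, 2, -3, -1, 0, 0;
    -2, -6, 5, 2, -3, 1, -2, 0, -2, 3, 1, 2, -3, -1, 0, 0;
    0, 0, 3, 1, -3, 0, 0, 0, 1, 1, 0, 0, -1, 1, 0, 0;
    -1, -3, 3, 1, -2, 1, -1, -1, -1, 1, 1, 1, -2, 0, 0, 0;
    -2, -6, 3, 1, -1, 1, -2, 0, -3, 1, 2, 2, -3, -1, 0, 0;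
    2, 6, -2, 1, -2, -1, 2, 0, 3, -1, -1, -2, 2, 2, 0, 0;
    0, -1, 2, 1, -2, 0, 0, 0, 0, 1, 0, 0, 0, 0, 0, 0;
    -2, -6, 2, 0, 1, 1, -2, 0, -3, 1, 2, 1, -2, -1, 0, 0;
    -1, -3, 1, 0, 1, 0, -1, 0, -1, 0, 1, 1, -1, -1, 0, 0;
    0, 0, 0, 0, 0, 0, 0, 0, 0, 0, 0, 0, 0, 0, 0, 1;
    -2, -6, 2, 0, 1, 1, -2, 0, -3, 1, 1, 2, -2, -1, 0, 0;
    -1, -3, 1, 0, 0, 1, -1, 0, -1, 0, 1, 1, -1, -1, 0, 0;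
    0, 0, 0, 0, 0, 0, 0, 0, 0, 0, 0, 0, 0, 0, -1, 0]

def Q3 : IntMat 16 := !![13, 19, -12, 9, 5, -9, 0, 15, -18, -4, 12, 6, 0, 12, 6, 0;
    4, 7, -4, 3, 2, -3, 0, 5, -6, -2, 4, 2, 0, 4, 2, 0;
    6, 10, -6, 5, 2, -4, 0, 7, -9, -2, 6, 3, 0, 6, 3, 0;
    8, 13, -8, 7, 3, -6, 0, 9, -11, -3, 8, 4, 0, 8, 4, 0;
    10, 16, -10, 8, 4, -7, 0, 11, -14, -4, 10, 5, 0, 10, 5, 0;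
    10, 16, -10, 8, 4, -7, 0, 11, -14, -4, 10, 4, 0, 10, 6, 0;
    3, 5, -4, 3, 1, -2, 0, 3, -4, -1, 3, 1, 0, 3, 2, 0;
    5, 8, -5, 4, 2, -3, -1, 6, -7, -2, 5, 2, 0, 5, 3, 0;
    -1, -2, 1, -1, 0, 1, 0, -2, 2, 0, -1, 0, 0, -1, 0, 0;
    4, 6, -4, 2, 3, -3, 0, 4, -5, -2, 4, 2, 0, 4, 2, 0;
    7, 11, -7, 4, 4, -5, 0, 8, -9, -3, 7, 4, 0, 7, 4, 0;
    7, 11, -7, 4, 4, -5, 0, 8, -9, -3, 6, 4, 0, 8, 4, 0;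
    1, 2, -1, 0, 1, -1, 0, 1, -1, 0, 1, 1, 0, 2, 1, 0;
    2, 3, -2, 1, 1, -1, 0, 2, -2, -1, 2, 1, 0, 3, 1, 0;
    0, 0, 0, 0, 0, 0, 0, 0, 0, 0, 0, 0, 0, 0, 0, -1;
    0, 0, 0, 0, 0, 0, 0, 0, 0, 0, 0, 0, 1, 0, 0, 0]

def P4 : IntMat 16 := !![18, 180, 9, 8, 21, -38, 35, -61, 43, -17, 2, -20, 2, -2, 0, 2;
    2, 20, 1, 1, 2, -4, 4, -7, 5, -2, 0, -2, 0, 0, 0, 0;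
    -1, -10, 0, 0, -2, 3, -3, 4, -2, 2, -1, -1, 0, 0, 0, 0;
    2, 20, 2, 2, 0, -2, 2, -6, 6, -1, 0, -6, 0, 0, 0, 0;
    1, 10, 2, 2, -2, 2, -2, -2, 4, 0, 0, -6, 0, 0, 0, 0;
    0, 2, 1, 1, -2, 3, -3, 1, 2, 0, 0, -4, 0, 0, 0, 0;
    1, 12, 2, 1, 0, 0, 0, -3, 4, -1, 0, -4, 0, 0, 0, 0;
    -2, -20, 0, -1, -3, 6, -5, 7, -4, 2, 0, 0, 0, 0, 0, 0;
    1, 8, 1, 0, 1, -1, 1, -3, 3, -1, 0, -2, 0, 0, 0, 0;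
    -2, -21, 0, 0, -4, 6, -6, 8, -4, 2, 0, 0, 0, 0, 0, 0;
    0, 0, 0, 0, 0, 0, 0, 0, 0, 0, 0, 0, 0, 0, -1, 0;
    2, 20, 1, 1, 2, -4, 4, -7, 5, -2, 0, -2, 0, -1, 0, 0;
    2, 20, 1, 1, 2, -4, 4, -7, 5, -2, 0, -2, 0, 0, 0, 1;
    2, 20, 1, 1, 2, -4, 4, -7, 5, -2, 0, -2, 1, 0, 0, 0;
    1, 9, 0, 1, 1, -2, 2, -3, 2, -1, 0, -1, 0, 0, 0, 0;
    -1, -10, -1, 0, -1, 2, -2, 3, -2, 1, 0, 1, 0, 0, 0, 0]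

def Q4 : IntMat 16 := !![20, 180, 40, -40, -19, 18, -42, 60, -36, 52, 0, -40, -40, -40, -18, 20;
    2, 18, 4, -4, -2, 2, -4, 6, -4, 5, 0, -4, -4, -4, -2, 2;
    1, 9, 2, -2, -1, 0, -1, 3, -2, 3, 0, -2, -2, -2, -1, 1;
    3, 27, 6, -6, -3, 2, -5, 9, -6, 8, 0, -6, -6, -6, -2, 4;
    6, 53, 12, -12, -6, 5, -11, 18, -11, 15, 0, -12, -12, -12, -5, 7;
    11, 100, 22, -22, -11, 10, -22, 34, -21, 28, 0, -22, -22, -22, -10, 12;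
    12, 109, 24, -23, -13, 11, -24, 37, -23, 31, 0, -24, -24, -24, -11, 13;
    17, 153, 34, -33, -18, 16, -34, 51, -32, 44, 0, -34, -34, -34, -16, 18;
    15, 136, 30, -29, -16, 14, -30, 45, -28, 39, 0, -30, -30, -30, -15, 17;
    18, 162, 36, -35, -18, 16, -36, 54, -34, 46, 0, -36, -36, -36, -18, 20;
    9, 80, 17, -17, -9, 8, -18, 27, -17, 23, 0, -18, -18, -18, -9, 10;
    10, 91, 20, -20, -10, 9, -20, 30, -19, 26, 0, -20, -20, -20, -10, 11;
    0, -1, 0, 0, 0, 0, 0, 0, 0, 0, 0, 0, 0, 1, 0, 0;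
    0, 1, 0, 0, 0, 0, 0, 0, 0, 0, 0, -1, 0, 0, 0, 0;
    0, 0, 0, 0, 0, 0, 0, 0, 0, 0, -1, 0, 0, 0, 0, 0;
    0, -1, 0, 0, 0, 0, 0, 0, 0, 0, 0, 0, 1, 0, 0, 0]

def P5 : IntMat 16 := !![9, 16, 0, -4, 4, -8, 8, 0, 0, -8, -8, 6, -8, -8, 4, 0;
    4, 9, 0, -2, 2, -4, 4, 0, 0, -4, -4, 3, -4, -4, 2, 0;
    2, 4, 1, -2, 1, -1, 2, -1, 0, -2, -2, 2, -2, -2, 0, 0;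
    -1, -2, 2, -1, 0, 2, 0, -2, 0, 0, 1, 0, 1, 1, -2, 0;
    2, 4, 3, -3, 2, -1, 3, -2, 0, -4, -2, 3, -2, -2, -2, 0;
    1, 2, 2, -2, 1, 0, 2, -1, -1, -3, -1, 2, -1, -1, -2, 0;
    0, 0, 1, -1, 0, 1, 1, -1, 0, -2, 0, 1, 0, 0, -2, 0;
    -1, -2, 0, 0, 0, 1, 0, -1, 0, 0, 1, 0, 1, 1, -2, 0;
    2, 4, 0, -1, 1, -2, 3, -1, 0, -2, -2, 2, -2, -2, 0, 0;
    -1, -2, 2, -1, 0, 1, 0, -1, 0, 0, 1, 0, 1, 1, -2, 0;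
    -2, -4, 0, 1, -1, 2, -2, 0, 0, 2, 2, -1, 1, 2, -1, 0;
    0, 0, 0, 0, 0, 0, 0, 0, 0, 0, 0, 0, 0, 0, 0, 1;
    -2, -4, 0, 1, -1, 2, -2, 0, 0, 2, 1, -1, 2, 2, -1, 0;
    -2, -4, 0, 1, -1, 2, -2, 0, 0, 2, 2, -1, 2, 1, -1, 0;
    -1, -2, 0, 1, -1, 1, -1, 0, 0, 1, 1, -1, 1, 1, -1, 0;
    -1, -2, 0, 0, 0, 1, -1, 0, 0, 1, 1, -1, 1, 1, -1, 0]

def Q5 : IntMat 16 := !![9, 16, -10, 12, -10, 0, 0, 8, -10, 8, 8, 0, 8, 8, 4, 4;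
    4, 9, -5, 6, -5, 0, 0, 4, -5, 4, 4, 0, 4, 4, 2, 2;
    2, 4, -3, 3, -2, 0, 0, 1, -2, 2, 2, 0, 2, 2, 1, 1;
    4, 8, -6, 6, -4, 0, 0, 3, -4, 3, 4, 0, 4, 4, 2, 2;
    4, 8, -6, 6, -4, 0, 0, 3, -4, 3, 4, 0, 4, 4, 1, 3;
    6, 12, -8, 9, -7, 0, 1, 4, -6, 5, 6, 0, 6, 6, 2, 4;
    4, 8, -6, 6, -5, 0, 1, 2, -3, 4, 4, 0, 4, 4, 1, 3;
    6, 12, -8, 8, -7, 0, 1, 4, -6, 6, 6, 0, 6, 6, 2, 4;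
    3, 6, -4, 4, -3, -1, 1, 2, -3, 3, 3, 0, 3, 3, 1, 2;
    5, 10, -6, 7, -6, 0, 0, 4, -5, 5, 5, 0, 5, 5, 2, 3;
    5, 10, -6, 7, -6, 0, 0, 5, -6, 5, 5, 0, 4, 5, 2, 2;
    6, 12, -7, 8, -7, 0, 0, 6, -7, 6, 6, 0, 6, 6, 2, 2;
    5, 10, -6, 7, -6, 0, 0, 5, -6, 5, 4, 0, 5, 5, 2, 2;
    5, 10, -6, 7, -6, 0, 0, 5, -6, 5, 5, 0, 5, 4, 2, 2;
    -1, -2, 1, -1, 1, 0, 0, -1, 1, -1, -1, 0, -1, -1, -1, -1;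
    0, 0, 0, 0, 0, 0, 0, 0, 0, 0, 0, 1, 0, 0, 0, 0]

lemma isometric_of_inv {N : ℕ} (G G' P Q : IntMat N) (h1 : P * Q = 1)
    (h2 : Pᵀ * G * P = G') : LatticeIsometric G G' := by
  refine ⟨P, ?_, h2⟩
  have h := Matrix.isUnit_det_of_right_inverse h1
  rcases Int.isUnit_iff.mp h with h' | h'
  · exact Or.inl h'
  · exact Or.inr h'

set_option maxHeartbeats 4000000 in
lemma hPQ1 : P1 * Q1 = 1 := by decide

set_option maxHeartbeats 4000000 in
lemma hG1 : P1ᵀ * GramL * P1 = GramL₁ := by decide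

set_option maxHeartbeats 4000000 in
lemma hPQ2 : P2 * Q2 = 1 := by decide

set_option maxHeartbeats 4000000 in
lemma hG2 : P2ᵀ * GramL * P2 = GramL₂ := by decide

set_option maxHeartbeats 4000000 in
lemma hPQ3 : P3 * Q3 = 1 := by decide

set_option maxHeartbeats 4000000 in
lemma hG3 : P3ᵀ * GramL * P3 = GramL₃ := by decide

set_option maxHeartbeats 4000000 in
lemma hPQ4 : P4 * Q4 = 1 := by decide

set_option maxHeartbeats 4000000 in
lemma hG4 : P4ᵀ * GramL * P4 = GramL₄ := by decide

set_option maxHeartbeats 4000000 in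
lemma hPQ5 : P5 * Q5 = 1 := by decide

set_option maxHeartbeats 4000000 in
lemma hG5 : P5ᵀ * GramL * P5 = GramL₅ := by decide

/-- The rank-16 even two-elementary lattice `L = H ⊕ E₈(-1) ⊕ A₁(-1)^{⊕6}` is
isometric to each of the five listed rank-16 lattices. -/
theorem rank16_lattice_presentations :
    LatticeIsometric GramL GramL₁ ∧ LatticeIsometric GramL GramL₂ ∧
    LatticeIsometric GramL GramL₃ ∧ LatticeIsometric GramL GramL₄ ∧
    LatticeIsometric GramL GramL₅ :=
  ⟨isometric_of_inv _ _ P1 Q1 hPQ1 hG1,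
   isometric_of_inv _ _ P2 Q2 hPQ2 hG2,
   isometric_of_inv _ _ P3 Q3 hPQ3 hG3,
   isometric_of_inv _ _ P4 Q4 hPQ4 hG4,
   isometric_of_inv _ _ P5 Q5 hPQ5 hG5⟩
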